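/- Let n ≥ 2 and i : Fin n. The (n+1)-qubit dictatorship state Δ⁺_i (defined by Δ⁺_i(s) = 2^(−n/2) if s(Fin.last n) = s(i) and 0 otherwise) is contextual when each of the n+1 parties chooses between the measurements A and B: there is no probability distribution d on global assignments g : Fin (n+1) → M → Bool such that for every context c and outcome o, the total d-probability of {g : ∀ k, g k (c k) = o k} equals the squared modulus of the amplitude of o in c. Likewise, Δ⁻_i (defined with s(Fin.last n) = ¬ s(i)) is contextual when each party chooses between the measurements C and D. -/

import Mathlib

noncomputable section

/-- Inner product of two `m`-qubit states `(Fin m → Bool) → ℂ`. -/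
def inner' {m : ℕ} (φ ψ : (Fin m → Bool) → ℂ) : ℂ :=
  ∑ s : Fin m → Bool, (starRingEnd ℂ) (φ s) * ψ s

/-- Tensor product of local vectors. -/
def tensor {m : ℕ} (v : Fin m → Bool → ℂ) : (Fin m → Bool) → ℂ :=
  fun s => ∏ i, v i (s i)

/-- Eigenbasis of the observable `A = U(π/2, π/8)`:
`a₊ = (1/√2)(1, e^{iπ/8})`, `a₋ = (1/√2)(1, -e^{iπ/8})`. -/
def vA (o : Bool) : Bool → ℂ := fun b =>
  (Real.sqrt 2 : ℂ)⁻¹ *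
    (if b then (if o then -1 else 1) * Complex.exp (Complex.I * (Real.pi / 8)) else 1)

/-- Eigenbasis of the observable `B = U(π/2, 5π/8)`:
`b₊ = (1/√2)(1, e^{i5π/8})`, `b₋ = (1/√2)(1, -e^{i5π/8})`. -/
def vB (o : Bool) : Bool → ℂ := fun b =>
  (Real.sqrt 2 : ℂ)⁻¹ *
    (if b then (if o then -1 else 1) * Complex.exp (Complex.I * (5 * Real.pi / 8)) else 1)

/-- Eigenbasis of the observable `C = U(π/8, π/2)`:
`c₊ = (cos(π/16), i·sin(π/16))`, `c₋ = (sin(π/16), -i·cos(π/16))`. -/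
def vC (o : Bool) : Bool → ℂ := fun b =>
  if o then (if b then -Complex.I * (Real.cos (Real.pi / 16) : ℂ)
             else (Real.sin (Real.pi / 16) : ℂ))
  else (if b then Complex.I * (Real.sin (Real.pi / 16) : ℂ)
        else (Real.cos (Real.pi / 16) : ℂ))

/-- Eigenbasis of the observable `D = U(5π/8, π/2)`:
`d₊ = (cos(5π/16), i·sin(5π/16))`, `d₋ = (sin(5π/16), -i·cos(5π/16))`. -/
def vD (o : Bool) : Bool → ℂ := fun b =>
  if o then (if b then -Complex.I * (Real.cos (5 * Real.pi / 16) : ℂ)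
             else (Real.sin (5 * Real.pi / 16) : ℂ))
  else (if b then Complex.I * (Real.sin (5 * Real.pi / 16) : ℂ)
        else (Real.cos (5 * Real.pi / 16) : ℂ))

/-- Each party chooses between `A` (measurement `false`) and `B` (`true`). -/
def mAB : Bool → Bool → Bool → ℂ := fun m => if m then vB else vA

/-- Each party chooses between `C` (measurement `false`) and `D` (`true`). -/
def mCD : Bool → Bool → Bool → ℂ := fun m => if m then vD else vC

/-- The `(n+1)`-qubit dictatorship state `Δ⁺ᵢ`: the last qubit equals qubit `i`. -/
def DeltaPN (n : ℕ) (i : Fin n) : (Fin (n + 1) → Bool) → ℂ :=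
  fun s => if s (Fin.last n) = s i.castSucc then (Real.sqrt (2 ^ n) : ℂ)⁻¹ else 0

/-- The `(n+1)`-qubit dictatorship state `Δ⁻ᵢ`: the last qubit is the negation
of qubit `i`. -/
def DeltaMN (n : ℕ) (i : Fin n) : (Fin (n + 1) → Bool) → ℂ :=
  fun s => if s (Fin.last n) = !(s i.castSucc) then (Real.sqrt (2 ^ n) : ℂ)⁻¹ else 0

/-- `ψ` with measurements `v` at each of the `n+1` parties admits a local
hidden-variable model: a probability distribution on global assignments
reproducing all the quantum probabilities. -/
def HasLHV (n : ℕ) (ψ : (Fin (n + 1) → Bool) → ℂ) (v : Bool → Bool → Bool → ℂ) : Prop :=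
  ∃ d : (Fin (n + 1) → Bool → Bool) → ℝ,
    (∀ g, 0 ≤ d g) ∧ (∑ g : Fin (n + 1) → Bool → Bool, d g) = 1 ∧
    ∀ (c : Fin (n + 1) → Bool) (o : Fin (n + 1) → Bool),
      (∑ g ∈ Finset.univ.filter fun g : Fin (n + 1) → Bool → Bool =>
          ∀ k, g k (c k) = o k, d g)
        = ‖inner' (tensor fun k => v (c k) (o k)) ψ‖ ^ 2

/-!
Let party `i` and the last party each choose between the two settings while every other
party uses the first one. On these two qubits the dictatorship state is a Bell pair, tensored
with `|+⟩` on the spectators, so summing out the spectators' outcomes leaves the Bell-pair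
correlation `±cos (θₓ + θ_y)` with `θ ∈ {π/8, 5π/8}` (for `A/B` on `Δ⁺` and for `C/D` on
`Δ⁻`). The CHSH combination of these four correlations has absolute value `2√2`, whereas any
probability distribution on global assignments gives at most `2`.
-/

open Finset Complex ComplexConjugate
open scoped Real

lemma Fintype.prod_ite_eq_mul_prod_erase {ι R : Type*} [Fintype ι] [DecidableEq ι] [CommMonoid R]
    (i : ι) (F G : ι → R) :
    ∏ k, (if k = i then F k else G k) = F i * ∏ k ∈ univ.erase i, G k := by
  rw [← mul_prod_erase _ _ (mem_univ i), if_pos rfl]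
  exact congrArg _ (Finset.prod_congr rfl fun k hk => if_neg (ne_of_mem_erase hk))

lemma Fintype.sum_mul_prod_ite_eq {ι α R : Type*} [Fintype ι] [DecidableEq ι] [Fintype α]
    [CommSemiring R] (i : ι) (h f g : α → R) :
    ∑ u : ι → α, h (u i) * ∏ k, (if k = i then f (u k) else g (u k))
      = (∑ a, h a * f a) * (∑ a, g a) ^ (Fintype.card ι - 1) := by
  calc ∑ u : ι → α, h (u i) * ∏ k, (if k = i then f (u k) else g (u k))
      = ∑ u : ι → α, ∏ k, (if k = i then h (u k) * f (u k) else g (u k)) := by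
        refine Finset.sum_congr rfl fun u _ => ?_
        simp only [Fintype.prod_ite_eq_mul_prod_erase, mul_assoc]
    _ = ∏ k, ∑ a, (if k = i then h a * f a else g a) :=
        (Fintype.prod_sum fun k a => if k = i then h a * f a else g a).symm
    _ = _ := by
        simp only [Finset.sum_ite_irrel, Fintype.prod_ite_eq_mul_prod_erase,
          prod_const, card_erase_of_mem (mem_univ i), card_univ]

lemma sum_fin_succ_pi_eq_sum_sum_snoc {α M : Type*} [Fintype α] [AddCommMonoid M] {n : ℕ}
    (f : (Fin (n + 1) → α) → M) :
    ∑ s, f s = ∑ b, ∑ u : Fin n → α, f (Fin.snoc u b) := by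
  rw [← (Fin.snocEquiv fun _ => α).sum_comp, Fintype.sum_prod_type]
  rfl

def agree (p q : Bool) : ℝ := if p = q then 1 else -1

def correlation {Ω : Type*} [Fintype Ω] (d : Ω → ℝ) (a b : Ω → Bool) : ℝ :=
  ∑ ω, agree (a ω) (b ω) * d ω

def chsh (E : Bool → Bool → ℝ) : ℝ :=
  E false false - E false true - E true false - E true true

lemma chsh_neg (E : Bool → Bool → ℝ) : (chsh fun x y => -E x y) = -chsh E := by
  simp only [chsh]; ring

lemma abs_chsh_agree_le_two (a b : Bool → Bool) :
    |chsh fun x y => agree (a x) (b y)| ≤ 2 := by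
  simp only [chsh]
  generalize a false = p, a true = q, b false = u, b true = w
  cases p <;> cases q <;> cases u <;> cases w <;> norm_num [agree]

lemma abs_chsh_correlation_le_two {Ω : Type*} [Fintype Ω] (d : Ω → ℝ) (hd₀ : ∀ ω, 0 ≤ d ω)
    (hd₁ : ∑ ω, d ω = 1) (a b : Bool → Ω → Bool) :
    |chsh fun x y => correlation d (a x) (b y)| ≤ 2 := by
  have hsum : (chsh fun x y => correlation d (a x) (b y)) =
      ∑ ω, (chsh fun x y => agree (a x ω) (b y ω)) * d ω := by
    simp only [chsh, correlation, sub_mul, sum_sub_distrib]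
  calc |chsh fun x y => correlation d (a x) (b y)|
      ≤ ∑ ω, |chsh fun x y => agree (a x ω) (b y ω)| * d ω := by
        rw [hsum]
        refine (abs_sum_le_sum_abs _ _).trans (le_of_eq (sum_congr rfl fun ω _ => ?_))
        rw [abs_mul, abs_of_nonneg (hd₀ ω)]
    _ ≤ ∑ ω, 2 * d ω := by
        gcongr with ω
        · exact hd₀ ω
        · exact abs_chsh_agree_le_two (a · ω) (b · ω)
    _ = 2 := by rw [← mul_sum, hd₁, mul_one]

lemma sum_mul_sum_filter_forall_eq {m : ℕ} {κ α : Type*} [Fintype κ] [DecidableEq κ]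
    [Fintype α] [DecidableEq α] (d : (Fin m → κ → α) → ℝ) (c : Fin m → κ)
    (F : (Fin m → α) → ℝ) :
    ∑ o : Fin m → α,
        F o * ∑ g ∈ univ.filter (fun g : Fin m → κ → α => ∀ k, g k (c k) = o k), d g
      = ∑ g, F (fun k => g k (c k)) * d g := by
  simp_rw [mul_sum]
  rw [← Finset.sum_fiberwise univ (fun g : Fin m → κ → α => fun k => g k (c k))]
  refine sum_congr rfl fun o _ => sum_congr ?_ fun g hg => ?_
  · ext g; simp [funext_iff]
  · rw [(mem_filter.mp hg).2]

def quantumCorrelation {m : ℕ} (ψ : (Fin m → Bool) → ℂ) (v : Bool → Bool → Bool → ℂ)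
    (c : Fin m → Bool) (I L : Fin m) : ℝ :=
  ∑ o : Fin m → Bool, agree (o I) (o L) * ‖inner' (tensor fun k => v (c k) (o k)) ψ‖ ^ 2

def pairContext {m : ℕ} (I L : Fin m) (x y : Bool) : Fin m → Bool :=
  fun k => if k = I then x else if k = L then y else false

theorem not_hasLHV_of_two_lt_abs_chsh {n : ℕ} (ψ : (Fin (n + 1) → Bool) → ℂ)
    (v : Bool → Bool → Bool → ℂ) {I L : Fin (n + 1)} (hIL : I ≠ L)
    (h : 2 < |chsh fun x y => quantumCorrelation ψ v (pairContext I L x y) I L|) :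
    ¬ HasLHV n ψ v := by
  rintro ⟨d, hd₀, hd₁, hd⟩
  have hE : ∀ x y, quantumCorrelation ψ v (pairContext I L x y) I L =
      correlation d (fun g => g I x) (fun g => g L y) := by
    intro x y
    simp only [quantumCorrelation, ← hd, sum_mul_sum_filter_forall_eq]
    simp [pairContext, hIL.symm, correlation]
  simp only [hE] at h
  exact (abs_chsh_correlation_le_two d hd₀ hd₁ _ _).not_gt h

def dictatorship (n : ℕ) (i : Fin n) (e : Bool → Bool) : (Fin (n + 1) → Bool) → ℂ :=
  fun s => if s (Fin.last n) = e (s i.castSucc) then (Real.sqrt (2 ^ n) : ℂ)⁻¹ else 0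

lemma inner_tensor_dictatorship {n : ℕ} (i : Fin n) (e : Bool → Bool)
    (w : Fin (n + 1) → Bool → ℂ) :
    inner' (tensor w) (dictatorship n i e) = (Real.sqrt (2 ^ n) : ℂ)⁻¹ *
      ∏ k : Fin n, ∑ t, conj (w k.castSucc t) *
        (if k = i then conj (w (Fin.last n) (e t)) else 1) := by
  have hterm : ∀ u : Fin n → Bool, conj (tensor w (Fin.snoc u (e (u i)))) =
      ∏ k : Fin n, conj (w k.castSucc (u k)) *
        (if k = i then conj (w (Fin.last n) (e (u k))) else 1) := by
    intro u
    simp only [tensor, Fin.prod_univ_castSucc, Fin.snoc_castSucc, Fin.snoc_last, map_mul,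
      map_prod, prod_mul_distrib, prod_ite_eq', mem_univ, if_true]
  calc inner' (tensor w) (dictatorship n i e)
      = ∑ u : Fin n → Bool, conj (tensor w (Fin.snoc u (e (u i)))) *
          (Real.sqrt (2 ^ n) : ℂ)⁻¹ := by
        rw [inner', sum_fin_succ_pi_eq_sum_sum_snoc, sum_comm]
        refine sum_congr rfl fun u _ => ?_
        simp [dictatorship, mul_ite]
    _ = _ := by
        simp only [hterm, Fintype.prod_sum, mul_sum, mul_comm]

lemma norm_sq_inner_tensor_pairContext_dictatorship {n : ℕ} (i : Fin n) (e : Bool → Bool)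
    (v : Bool → Bool → Bool → ℂ) (x y : Bool) (o : Fin (n + 1) → Bool) :
    ‖inner' (tensor fun k => v (pairContext i.castSucc (Fin.last n) x y k) (o k))
        (dictatorship n i e)‖ ^ 2 =
      (2 ^ n)⁻¹ * ∏ k : Fin n,
        if k = i then ‖∑ t, conj (v x (o k.castSucc) t) * conj (v y (o (Fin.last n)) (e t))‖ ^ 2
        else ‖∑ t, conj (v false (o k.castSucc) t)‖ ^ 2 := by
  have hiL : i.castSucc ≠ Fin.last n := (Fin.castSucc_lt_last i).ne
  rw [inner_tensor_dictatorship, norm_mul, mul_pow, norm_prod, ← prod_pow]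
  congr 1
  · rw [norm_inv, Complex.norm_real, Real.norm_of_nonneg (Real.sqrt_nonneg _), inv_pow,
      Real.sq_sqrt (by positivity)]
  · refine prod_congr rfl fun k _ => ?_
    split_ifs with hk
    · subst hk
      simp [pairContext, hiL.symm]
    · have hkL : k.castSucc ≠ Fin.last n := (Fin.castSucc_lt_last k).ne
      simp [pairContext, hk, hkL]

-- Correlation of `v₁ ⊗ v₂` on the Bell pair `(|0, e 0⟩ + |1, e 1⟩)/√2`, whose squared
-- normalisation is the `/ 2`.
def bellCorrelation (e : Bool → Bool) (v₁ v₂ : Bool → Bool → ℂ) : ℝ :=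
  ∑ a, ∑ b, agree a b * (‖∑ t, conj (v₁ a t) * conj (v₂ b (e t))‖ ^ 2 / 2)

-- `hv`: a spectator measuring the first setting on `|+⟩` has outcome probabilities summing to 1.
lemma quantumCorrelation_dictatorship {n : ℕ} (i : Fin n) (e : Bool → Bool)
    (v : Bool → Bool → Bool → ℂ) (hv : ∑ a, ‖∑ t, conj (v false a t)‖ ^ 2 = 2) (x y : Bool) :
    quantumCorrelation (dictatorship n i e) v (pairContext i.castSucc (Fin.last n) x y)
      i.castSucc (Fin.last n) = bellCorrelation e (v x) (v y) := by
  set P : Bool → Bool → ℝ := fun a b => ‖∑ t, conj (v x a t) * conj (v y b (e t))‖ ^ 2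
  set R : Bool → ℝ := fun a => ‖∑ t, conj (v false a t)‖ ^ 2
  have hn : 2 * 2 ^ (n - 1) = (2 : ℝ) ^ n := by
    rw [← pow_succ', Nat.sub_add_cancel i.pos]
  calc quantumCorrelation (dictatorship n i e) v (pairContext i.castSucc (Fin.last n) x y)
        i.castSucc (Fin.last n)
      = ∑ b, (2 ^ n)⁻¹ * ∑ u : Fin n → Bool,
          agree (u i) b * ∏ k, (if k = i then P (u k) b else R (u k)) := by
        simp only [quantumCorrelation, norm_sq_inner_tensor_pairContext_dictatorship,
          sum_fin_succ_pi_eq_sum_sum_snoc, Fin.snoc_castSucc, Fin.snoc_last, mul_sum]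
        exact sum_congr rfl fun b _ => sum_congr rfl fun u _ => mul_left_comm _ _ _
    _ = ∑ b, (2 ^ n)⁻¹ * ((∑ a, agree a b * P a b) * 2 ^ (n - 1)) := by
        refine sum_congr rfl fun b _ => ?_
        rw [Fintype.sum_mul_prod_ite_eq i (agree · b) (P · b) R, hv, Fintype.card_fin]
    _ = bellCorrelation e (v x) (v y) := by
        rw [bellCorrelation, sum_comm]
        refine sum_congr rfl fun b _ => ?_
        rw [← hn, sum_mul, mul_sum]
        refine sum_congr rfl fun a _ => ?_
        field_simp
        rfl

-- Eigenbasis of `cos θ X + sin θ Y`.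
def xyPlaneBasis (θ : ℝ) (o : Bool) : Bool → ℂ := fun b =>
  (Real.sqrt 2 : ℂ)⁻¹ * (if b then (if o then -1 else 1) * exp (I * θ) else 1)

-- Eigenbasis of `cos 2φ Z + sin 2φ Y`.
def yzPlaneBasis (φ : ℝ) (o : Bool) : Bool → ℂ := fun b =>
  if o then (if b then -I * (Real.cos φ : ℂ) else (Real.sin φ : ℂ))
  else (if b then I * (Real.sin φ : ℂ) else (Real.cos φ : ℂ))

lemma sum_norm_sq_sum_conj_xyPlaneBasis (θ : ℝ) :
    ∑ a, ‖∑ t, conj (xyPlaneBasis θ a t)‖ ^ 2 = 2 := by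
  simp only [Fintype.univ_bool, xyPlaneBasis, ite_mul, neg_mul, one_mul, mul_ite, mul_neg,
    mul_one, mem_singleton, Bool.true_eq_false, not_false_eq_true, sum_insert, ↓reduceIte,
    sum_singleton, Bool.false_eq_true, map_inv₀, conj_ofReal, Complex.sq_norm, normSq_apply,
    add_re, conj_re, inv_re, ofReal_re, Nat.ofNat_nonneg, Real.mul_self_sqrt, ofReal_im, mul_zero,
    add_zero, add_im, conj_im, inv_im, neg_zero, zero_div, neg_neg, neg_re, mul_re, exp_re, I_re,
    zero_mul, I_im, sub_self, Real.exp_zero, mul_im, zero_add, exp_im, sub_zero, neg_im]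
  linear_combination (1 + Real.sin θ ^ 2 + Real.cos θ ^ 2) / 2 * Real.sq_sqrt zero_le_two +
    Real.sin_sq_add_cos_sq θ

lemma sum_norm_sq_sum_conj_yzPlaneBasis (φ : ℝ) :
    ∑ a, ‖∑ t, conj (yzPlaneBasis φ a t)‖ ^ 2 = 2 := by
  simp only [Fintype.univ_bool, yzPlaneBasis, ofReal_cos, neg_mul, ofReal_sin, mem_singleton,
    Bool.true_eq_false, not_false_eq_true, sum_insert, ↓reduceIte, sum_singleton,
    Bool.false_eq_true, Complex.sq_norm, normSq_apply, add_re, conj_re, add_im, conj_im, neg_re,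
    mul_re, I_re, cos_ofReal_re, zero_mul, I_im, cos_ofReal_im, mul_zero, sub_self, neg_zero,
    sin_ofReal_re, zero_add, neg_im, mul_im, one_mul, neg_neg, sin_ofReal_im, add_zero, mul_neg]
  linear_combination 2 * Real.sin_sq_add_cos_sq φ

lemma bellCorrelation_xyPlaneBasis (θ θ' : ℝ) :
    bellCorrelation id (xyPlaneBasis θ) (xyPlaneBasis θ') = Real.cos (θ + θ') := by
  have h4 : Real.sqrt 2 ^ 4 = 4 := by
    rw [show 4 = 2 * 2 from rfl, pow_mul, Real.sq_sqrt zero_le_two]; norm_num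
  simp only [bellCorrelation, Fintype.univ_bool, agree, xyPlaneBasis, ite_mul, neg_mul, one_mul,
    mul_ite, mul_neg, mul_one, id_eq, mem_singleton, Bool.true_eq_false, not_false_eq_true,
    sum_insert, ↓reduceIte, sum_singleton, Bool.false_eq_true, map_inv₀, conj_ofReal,
    Complex.sq_norm, normSq_apply, add_re, mul_re, conj_re, conj_im, neg_neg, inv_re, ofReal_re,
    Nat.ofNat_nonneg, Real.mul_self_sqrt, ofReal_im, mul_zero, add_zero, inv_im, neg_zero,
    zero_div, sub_zero, add_im, mul_im, zero_mul, neg_re, exp_re, I_re, I_im, sub_self,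
    Real.exp_zero, zero_add, exp_im, neg_im, sub_neg_eq_add, Real.cos_add]
  ring_nf
  simp only [h4]
  ring

lemma bellCorrelation_yzPlaneBasis (φ φ' : ℝ) :
    bellCorrelation (!·) (yzPlaneBasis φ) (yzPlaneBasis φ') = -Real.cos (2 * (φ + φ')) := by
  simp only [bellCorrelation, Fintype.univ_bool, agree, yzPlaneBasis, ofReal_cos, neg_mul,
    ofReal_sin, Bool.not_eq_eq_eq_not, Bool.not_true, mem_singleton, Bool.true_eq_false,
    not_false_eq_true, sum_insert, ↓reduceIte, sum_singleton, Bool.false_eq_true, Complex.sq_norm,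
    normSq_apply, add_re, mul_re, conj_re, conj_im, mul_neg, neg_neg, add_im, mul_im, ite_mul,
    one_mul, sin_ofReal_re, sin_ofReal_im, mul_zero, sub_zero, neg_re, I_re, cos_ofReal_re,
    zero_mul, I_im, cos_ofReal_im, sub_self, neg_zero, neg_im, zero_add, sub_neg_eq_add, add_zero,
    zero_sub, Real.cos_two_mul', Real.cos_add, Real.sin_add, neg_sub]
  ring

def chshAngle (x : Bool) : ℝ := if x then 5 * π / 8 else π / 8

lemma chsh_cos_chshAngle :
    (chsh fun x y => Real.cos (chshAngle x + chshAngle y)) = 2 * Real.sqrt 2 := by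
  have h₁ : Real.cos (π / 8 + π / 8) = Real.sqrt 2 / 2 := by
    rw [← Real.cos_pi_div_four]; ring_nf
  have h₂ : Real.cos (π / 8 + 5 * π / 8) = -(Real.sqrt 2 / 2) := by
    rw [← Real.cos_pi_div_four, ← Real.cos_pi_sub]; ring_nf
  have h₃ : Real.cos (5 * π / 8 + 5 * π / 8) = -(Real.sqrt 2 / 2) := by
    rw [← Real.cos_pi_div_four, ← Real.cos_add_pi]; ring_nf
  simp only [chsh, chshAngle, if_true, Bool.false_eq_true, if_false,
    add_comm (5 * π / 8) (π / 8), h₁, h₂, h₃]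
  ring

lemma mAB_eq_xyPlaneBasis (x : Bool) : mAB x = xyPlaneBasis (chshAngle x) := by
  cases x <;> ext o b <;> simp [mAB, vA, vB, xyPlaneBasis, chshAngle]

lemma mCD_eq_yzPlaneBasis (x : Bool) : mCD x = yzPlaneBasis (chshAngle x / 2) := by
  have h₁ : π / 8 / 2 = π / 16 := by ring
  have h₂ : 5 * π / 8 / 2 = 5 * π / 16 := by ring
  cases x <;> simp only [mCD, chshAngle, Bool.false_eq_true, if_true, if_false, h₁, h₂] <;> rfl

lemma quantumCorrelation_DeltaPN {n : ℕ} (i : Fin n) (x y : Bool) :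
    quantumCorrelation (DeltaPN n i) mAB (pairContext i.castSucc (Fin.last n) x y)
      i.castSucc (Fin.last n) = Real.cos (chshAngle x + chshAngle y) := by
  have hv : ∑ a, ‖∑ t, conj (mAB false a t)‖ ^ 2 = 2 := by
    rw [mAB_eq_xyPlaneBasis]; exact sum_norm_sq_sum_conj_xyPlaneBasis _
  rw [show DeltaPN n i = dictatorship n i id from rfl,
    quantumCorrelation_dictatorship i id mAB hv, mAB_eq_xyPlaneBasis, mAB_eq_xyPlaneBasis,
    bellCorrelation_xyPlaneBasis]

lemma quantumCorrelation_DeltaMN {n : ℕ} (i : Fin n) (x y : Bool) :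
    quantumCorrelation (DeltaMN n i) mCD (pairContext i.castSucc (Fin.last n) x y)
      i.castSucc (Fin.last n) = -Real.cos (chshAngle x + chshAngle y) := by
  have hv : ∑ a, ‖∑ t, conj (mCD false a t)‖ ^ 2 = 2 := by
    rw [mCD_eq_yzPlaneBasis]; exact sum_norm_sq_sum_conj_yzPlaneBasis _
  rw [show DeltaMN n i = dictatorship n i (!·) from rfl,
    quantumCorrelation_dictatorship i (!·) mCD hv, mCD_eq_yzPlaneBasis, mCD_eq_yzPlaneBasis,
    bellCorrelation_yzPlaneBasis, show 2 * (chshAngle x / 2 + chshAngle y / 2) =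
      chshAngle x + chshAngle y by ring]

theorem dictatorship_contextual_n_general (n : ℕ) (i : Fin n) :
    ¬ HasLHV n (DeltaPN n i) mAB ∧ ¬ HasLHV n (DeltaMN n i) mCD := by
  have hiL : i.castSucc ≠ Fin.last n := (Fin.castSucc_lt_last i).ne
  have hviolation : 2 < |2 * Real.sqrt 2| := by
    rw [abs_of_pos (by positivity)]
    linarith [Real.one_lt_sqrt_two]
  constructor
  · refine not_hasLHV_of_two_lt_abs_chsh _ _ hiL ?_
    simpa only [quantumCorrelation_DeltaPN, chsh_cos_chshAngle] using hviolation
  · refine not_hasLHV_of_two_lt_abs_chsh _ _ hiL ?_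
    simpa only [quantumCorrelation_DeltaMN, chsh_neg, chsh_cos_chshAngle, abs_neg] using hviolation

/-- For `n ≥ 2`, the `(n+1)`-qubit dictatorship state `Δ⁺ᵢ` is contextual for
the `A`/`B` measurements and `Δ⁻ᵢ` is contextual for the `C`/`D` measurements. -/
theorem dictatorship_contextual_n (n : ℕ) (hn : 2 ≤ n) (i : Fin n) :
    ¬ HasLHV n (DeltaPN n i) mAB ∧ ¬ HasLHV n (DeltaMN n i) mCD :=
  dictatorship_contextual_n_general n i
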